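/- arXiv:1004.4432 — 7 statements merged into one kernel-verified Lean document; each statement's English description precedes it below -/
import Mathlib

section
/- Let (Ω, 𝒜, P) be a probability space, let D be a natural number, and let p ∈ [0,1], q ∈ [0,1] be reals. Let F₁, …, F_{D+1} be measurable events (packet-decoding failure in each slot) such that P(⋂_{t∈T} F_t) ≥ q^{|T|} for every subset T ⊆ {1,…,D+1}. Let B₁, …, B_{D+1} be measurable events (ALOHA transmission attempts) such that for every pair of disjoint subsets T₁, T₂ ⊆ {1,…,D+1} and every subset T₃ ⊆ {1,…,D+1}, P((⋂_{t∈T₁} B_t) ∩ (⋂_{t∈T₂} B_tᶜ) ∩ (⋂_{t∈T₃} F_t)) = p^{|T₁|}(1−p)^{|T₂|} · P(⋂_{t∈T₃} F_t). Then the probability of success within D retransmissions satisfies P(⋃_{t=1}^{D+1} (B_t ∩ F_tᶜ)) ≤ 1 − (pq + 1 − p)^{D+1}. -/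
open MeasureTheory

/-- Upper bound on the success probability of single-hop ARQ transmission with at most
`D` retransmissions under slotted ALOHA (Proposition 3, abstract form). -/
theorem stmt_0 {Ω : Type*} [MeasurableSpace Ω]
    (μ : Measure Ω) [IsProbabilityMeasure μ]
    (D : ℕ) (p q : ℝ) (hp : p ∈ Set.Icc (0:ℝ) 1) (hq : q ∈ Set.Icc (0:ℝ) 1)
    (F B : Fin (D + 1) → Set Ω)
    (hF : ∀ t, MeasurableSet (F t)) (hB : ∀ t, MeasurableSet (B t))
    (hFq : ∀ T : Finset (Fin (D + 1)),
      q ^ T.card ≤ (μ (⋂ t ∈ T, F t)).toReal)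
    (hBp : ∀ T₁ T₂ T₃ : Finset (Fin (D + 1)), Disjoint T₁ T₂ →
      (μ ((⋂ t ∈ T₁, B t) ∩ (⋂ t ∈ T₂, (B t)ᶜ) ∩ (⋂ t ∈ T₃, F t))).toReal
        = p ^ T₁.card * (1 - p) ^ T₂.card * (μ (⋂ t ∈ T₃, F t)).toReal) :
    (μ (⋃ t, B t ∩ (F t)ᶜ)).toReal ≤ 1 - (p * q + 1 - p) ^ (D + 1) := by
  obtain ⟨hp0, hp1⟩ := hp
  obtain ⟨hq0, hq1⟩ := hq
  set U : Set Ω := ⋃ t, B t ∩ (F t)ᶜ with hU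
  have hUm : MeasurableSet U := MeasurableSet.iUnion fun t => (hB t).inter (hF t).compl
  set E : Finset (Fin (D + 1)) → Set Ω := fun S =>
    (⋂ t ∈ S, B t) ∩ (⋂ t ∈ Sᶜ, (B t)ᶜ) ∩ (⋂ t ∈ S, F t) with hEdef
  have hEm : ∀ S, MeasurableSet (E S) := fun S =>
    ((MeasurableSet.biInter S.countable_toSet fun t _ => hB t).inter
      (MeasurableSet.biInter Sᶜ.countable_toSet fun t _ => (hB t).compl)).inter
      (MeasurableSet.biInter S.countable_toSet fun t _ => hF t)
  -- pairwise disjointness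
  have hdisj : ∀ S S' : Finset (Fin (D + 1)), S ≠ S' → Disjoint (E S) (E S') := by
    intro S S' hne
    rw [Set.disjoint_left]
    intro ω hω hω'
    obtain ⟨⟨h1, h2⟩, _⟩ := hω
    obtain ⟨⟨h1', h2'⟩, _⟩ := hω'
    obtain ⟨t, ht⟩ : ∃ t, (t ∈ S ∧ t ∉ S') ∨ (t ∈ S' ∧ t ∉ S) := by
      by_contra h
      push_neg at h
      exact hne (Finset.ext fun t => by have := h t; tauto)
    rcases ht with ⟨h1t, h2t⟩ | ⟨h1t, h2t⟩
    · exact (Set.mem_iInter₂.mp h2' t (Finset.mem_compl.mpr h2t))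
        (Set.mem_iInter₂.mp h1 t h1t)
    · exact (Set.mem_iInter₂.mp h2 t (Finset.mem_compl.mpr h2t))
        (Set.mem_iInter₂.mp h1' t h1t)
  -- union of E's is inside Uᶜ
  have hsub : (⋃ S : Finset (Fin (D + 1)), E S) ⊆ Uᶜ := by
    intro ω hω
    obtain ⟨S, hS⟩ := Set.mem_iUnion.mp hω
    obtain ⟨⟨h1, h2⟩, h3⟩ := hS
    intro hωU
    obtain ⟨t, htB, htF⟩ := Set.mem_iUnion.mp hωU
    by_cases h : t ∈ S
    · exact htF (Set.mem_iInter₂.mp h3 t h)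
    · exact (Set.mem_iInter₂.mp h2 t (Finset.mem_compl.mpr h)) htB
  have hsum : ∑ S : Finset (Fin (D + 1)), μ (E S) ≤ μ Uᶜ := by
    have := measure_biUnion_finset (μ := μ) (s := (Finset.univ : Finset (Finset (Fin (D + 1)))))
      (f := E) (fun S _ S' _ h => hdisj S S' h) (fun S _ => hEm S)
    rw [← this]
    apply measure_mono
    refine Set.iUnion₂_subset fun S _ => ?_
    exact (Set.subset_iUnion E S).trans hsub
  -- lower bound each term
  have hterm : ∀ S : Finset (Fin (D + 1)),
      (p * q) ^ S.card * (1 - p) ^ (D + 1 - S.card) ≤ (μ (E S)).toReal := by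
    intro S
    have hd : Disjoint S Sᶜ := disjoint_compl_right
    have heq := hBp S Sᶜ S hd
    have hcard : Sᶜ.card = D + 1 - S.card := by
      rw [Finset.card_compl, Fintype.card_fin]
    rw [hEdef]
    simp only []
    rw [heq, hcard, mul_pow]
    have hnn : 0 ≤ p ^ S.card * (1 - p) ^ (D + 1 - S.card) :=
      mul_nonneg (pow_nonneg hp0 _) (pow_nonneg (by linarith) _)
    calc p ^ S.card * q ^ S.card * (1 - p) ^ (D + 1 - S.card)
        = p ^ S.card * (1 - p) ^ (D + 1 - S.card) * q ^ S.card := by ring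
      _ ≤ p ^ S.card * (1 - p) ^ (D + 1 - S.card) * (μ (⋂ t ∈ S, F t)).toReal :=
          mul_le_mul_of_nonneg_left (hFq S) hnn
      _ = p ^ S.card * (1 - p) ^ (D + 1 - S.card) * (μ (⋂ t ∈ S, F t)).toReal := rfl
  -- binomial expansion
  have hbin : (p * q + (1 - p)) ^ (D + 1)
      = ∑ S : Finset (Fin (D + 1)), (p * q) ^ S.card * (1 - p) ^ (D + 1 - S.card) := by
    have := Finset.prod_add (f := fun _ : Fin (D + 1) => p * q) (g := fun _ : Fin (D + 1) => 1 - p)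
      Finset.univ
    simp only [Finset.prod_const, Finset.powerset_univ] at this
    rw [Finset.card_univ, Fintype.card_fin] at this
    rw [this]
    refine Finset.sum_congr rfl fun S _ => ?_
    rw [← Finset.compl_eq_univ_sdiff, Finset.card_compl, Fintype.card_fin]
  -- key inequality
  have key : (p * q + (1 - p)) ^ (D + 1) ≤ (μ Uᶜ).toReal := by
    rw [hbin]
    calc ∑ S : Finset (Fin (D + 1)), (p * q) ^ S.card * (1 - p) ^ (D + 1 - S.card)
        ≤ ∑ S : Finset (Fin (D + 1)), (μ (E S)).toReal :=
          Finset.sum_le_sum fun S _ => hterm S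
      _ = (∑ S : Finset (Fin (D + 1)), μ (E S)).toReal := by
          rw [ENNReal.toReal_sum fun S _ => measure_ne_top μ _]
      _ ≤ (μ Uᶜ).toReal := by
          exact ENNReal.toReal_mono (measure_ne_top μ _) hsum
  have hcompl : (μ U).toReal + (μ Uᶜ).toReal = 1 := by
    have h := measure_add_measure_compl (μ := μ) hUm
    have := congrArg ENNReal.toReal h
    rwa [ENNReal.toReal_add (measure_ne_top μ _) (measure_ne_top μ _),
      measure_univ, ENNReal.toReal_one] at this
  have heq : (p * q + 1 - p) ^ (D + 1) = (p * q + (1 - p)) ^ (D + 1) := by ring_nf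
  rw [heq]
  linarith
end

section
/- Let D be a natural number, p ∈ [0,1], q ∈ [0,1), and ρ ≥ 0 be reals, and let a_{j,k} (for 1 ≤ j ≤ D+1 and 0 ≤ k ≤ j−1) be reals satisfying a_{j,k} ≥ ρ·q^{k} for all such j, k. Then ∑_{j=1}^{D+1} ∑_{k=0}^{j−1} C(j−1,k) · p^{k+1} · (1−p)^{j−1−k} · a_{j,k} ≥ ρ · (1 − (pq + 1 − p)^{D+1}) / (1 − q). -/
/-- Arithmetic core of the lower bound on the single-hop success probability
within `D` retransmissions (equation (11)). -/
theorem stmt_2 (D : ℕ) (p q ρ : ℝ) (hp : p ∈ Set.Icc (0:ℝ) 1)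
    (hq : q ∈ Set.Ico (0:ℝ) 1) (hρ : 0 ≤ ρ)
    (a : ℕ → ℕ → ℝ)
    (ha : ∀ j ∈ Finset.Icc 1 (D + 1), ∀ k ∈ Finset.range j, ρ * q ^ k ≤ a j k) :
    ρ * (1 - (p * q + 1 - p) ^ (D + 1)) / (1 - q)
      ≤ ∑ j ∈ Finset.Icc 1 (D + 1), ∑ k ∈ Finset.range j,
          ((j - 1).choose k : ℝ) * p ^ (k + 1) * (1 - p) ^ (j - 1 - k) * a j k := by
  obtain ⟨hp0, hp1⟩ := hp
  obtain ⟨hq0, hq1⟩ := hq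
  have key : ∀ i ∈ Finset.range (D+1),
      ρ * p * (p * q + 1 - p) ^ i ≤ ∑ k ∈ Finset.range (i+1),
        (Nat.choose i k : ℝ) * p ^ (k+1) * (1-p)^(i-k) * a (i+1) k := by
    intro i hi
    have hi' : i + 1 ∈ Finset.Icc 1 (D+1) := by
      simp only [Finset.mem_range] at hi
      simp only [Finset.mem_Icc]; omega
    have expand : (p * q + 1 - p) ^ i
        = ∑ k ∈ Finset.range (i+1), (p*q)^k * (1-p)^(i-k) * (Nat.choose i k : ℝ) := by
      rw [← add_pow]; ring_nf
    rw [expand, Finset.mul_sum]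
    apply Finset.sum_le_sum
    intro k hk
    have ha' := ha (i+1) hi' k hk
    have h1p : (0:ℝ) ≤ 1 - p := by linarith
    have h1 : (0:ℝ) ≤ (Nat.choose i k : ℝ) * p ^ (k+1) * (1-p)^(i-k) := by positivity
    calc ρ * p * ((p*q)^k * (1-p)^(i-k) * (Nat.choose i k : ℝ))
        = (Nat.choose i k : ℝ) * p ^ (k+1) * (1-p)^(i-k) * (ρ * q^k) := by
          rw [mul_pow]; ring
      _ ≤ _ := mul_le_mul_of_nonneg_left ha' h1
  have sum_eq : ∑ j ∈ Finset.Icc 1 (D + 1), ∑ k ∈ Finset.range j,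
          ((j - 1).choose k : ℝ) * p ^ (k + 1) * (1 - p) ^ (j - 1 - k) * a j k
      = ∑ i ∈ Finset.range (D+1), ∑ k ∈ Finset.range (i+1),
          (Nat.choose i k : ℝ) * p ^ (k+1) * (1-p)^(i-k) * a (i+1) k := by
    rw [← Finset.Ico_add_one_right_eq_Icc, Finset.sum_Ico_eq_sum_range]
    apply Finset.sum_congr (by norm_num)
    intro i _
    simp [Nat.add_sub_cancel, Nat.add_comm 1 i]
  have hgs := geom_sum_mul (p*q+1-p) (D+1)
  have h1q : (1:ℝ) - q ≠ 0 := by linarith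
  have h2 : ρ * (1 - (p*q+1-p)^(D+1))
      = ρ * p * (∑ i ∈ Finset.range (D+1), (p*q+1-p)^i) * (1-q) := by
    linear_combination ρ * hgs
  have hLHS : ρ * (1 - (p*q+1-p)^(D+1)) / (1-q)
      = ρ * p * ∑ i ∈ Finset.range (D+1), (p*q+1-p)^i := by
    rw [h2, mul_div_assoc, div_self h1q, mul_one]
  rw [sum_eq, hLHS, Finset.mul_sum]
  exact Finset.sum_le_sum key
end

section
/- For all reals α > 2 and c > 0, the Lebesgue integral over the plane ∫_{ℝ²} 1/(1 + ‖x‖^{α}/c) dx equals 2π²·c^{2/α} / (α·sin(2π/α)). -/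
/-!
In polar coordinates the integral is `2π ∫₀^∞ y / (1 + y^α / c) dy`. The substitution
`u = y^α / c` turns the radial integral into `(c^{2/α} / α) ∫₀^∞ u^{s-1} / (1 + u) du` with
`s = 2/α ∈ (0, 1)`, and `u = t / (1 - t)` turns that Mellin integral into the Beta integral
`B(s, 1 - s) = Γ(s) Γ(1 - s) = π / sin (π s)`.
-/

open MeasureTheory Real Set

theorem integral_Ioo_rpow_mul_one_sub_rpow {a b : ℝ} (ha : 0 < a) (hb : 0 < b) :
    ∫ t in Ioo (0 : ℝ) 1, t ^ (a - 1) * (1 - t) ^ (b - 1)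
      = Gamma a * Gamma b / Gamma (a + b) := by
  apply Complex.ofReal_injective
  rw [← integral_complex_ofReal, ← integral_Ioc_eq_integral_Ioo,
    ← intervalIntegral.integral_of_le zero_le_one]
  push_cast
  rw [← Complex.Gamma_ofReal, ← Complex.Gamma_ofReal, ← Complex.Gamma_ofReal,
    Complex.ofReal_add, ← Complex.betaIntegral_eq_Gamma_mul_div _ _ (by simpa) (by simpa),
    Complex.betaIntegral]
  refine intervalIntegral.integral_congr fun t ht => ?_
  rw [uIcc_of_le zero_le_one] at ht
  rw [Complex.ofReal_cpow ht.1, Complex.ofReal_cpow (sub_nonneg.2 ht.2)]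
  push_cast
  rfl

theorem image_div_one_sub_Ioo : (fun t : ℝ => t / (1 - t)) '' Ioo 0 1 = Ioi 0 := by
  ext u
  constructor
  · rintro ⟨t, ⟨ht0, ht1⟩, rfl⟩
    exact div_pos ht0 (sub_pos.2 ht1)
  · intro (hu : 0 < u)
    refine ⟨u / (1 + u), ⟨by positivity, (div_lt_one (by positivity)).2 (by linarith)⟩, ?_⟩
    field_simp
    ring_nf

theorem injOn_div_one_sub : InjOn (fun t : ℝ => t / (1 - t)) (Ioo 0 1) := by
  intro a ha b hb hab
  rw [div_eq_div_iff (sub_pos.2 ha.2).ne' (sub_pos.2 hb.2).ne'] at hab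
  linarith

theorem hasDerivAt_div_one_sub {t : ℝ} (ht : t ≠ 1) :
    HasDerivAt (fun t : ℝ => t / (1 - t)) ((1 - t) ^ 2)⁻¹ t := by
  have h1t : 1 - t ≠ 0 := sub_ne_zero.2 ht.symm
  refine ((hasDerivAt_id' t).div ((hasDerivAt_id' t).const_sub 1) h1t).congr_deriv ?_
  field_simp
  ring

theorem integral_Ioi_rpow_div_one_add_rpow {a b : ℝ} (ha : 0 < a) (hb : 0 < b) :
    ∫ u in Ioi (0 : ℝ), u ^ (a - 1) / (1 + u) ^ (a + b)
      = Gamma a * Gamma b / Gamma (a + b) := by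
  rw [← image_div_one_sub_Ioo, integral_image_eq_integral_abs_deriv_smul measurableSet_Ioo
    (fun t ht => (hasDerivAt_div_one_sub ht.2.ne).hasDerivWithinAt) injOn_div_one_sub,
    ← integral_Ioo_rpow_mul_one_sub_rpow ha hb]
  refine setIntegral_congr_fun measurableSet_Ioo fun t ⟨ht0, ht1⟩ => ?_
  have h1t : 0 < 1 - t := sub_pos.2 ht1
  have : 1 + t / (1 - t) = (1 - t)⁻¹ := by field_simp; ring
  simp only [smul_eq_mul, this, abs_of_pos (inv_pos.2 (pow_pos h1t 2)),
    div_rpow ht0.le h1t.le, inv_rpow h1t.le]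
  rw [← rpow_two, ← rpow_neg h1t.le, ← rpow_neg h1t.le, div_div, ← rpow_add h1t,
    mul_div_left_comm, ← rpow_sub h1t]
  ring_nf

theorem integral_Ioi_rpow_div_one_add {s : ℝ} (h0 : 0 < s) (h1 : s < 1) :
    ∫ u in Ioi (0 : ℝ), u ^ (s - 1) / (1 + u) = π / sin (π * s) := by
  simpa only [add_sub_cancel, rpow_one, Gamma_one, div_one, Gamma_mul_Gamma_one_sub] using
    integral_Ioi_rpow_div_one_add_rpow h0 (sub_pos.2 h1)

theorem integral_Ioi_rpow_div_one_add_div {s c : ℝ} (h0 : 0 < s) (h1 : s < 1) (hc : 0 < c) :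
    ∫ u in Ioi (0 : ℝ), u ^ (s - 1) / (1 + u / c) = c ^ s * (π / sin (π * s)) := by
  rw [← mul_zero c, ← integral_comp_mul_left_Ioi' _ 0 hc]
  have hscale : ∀ x ∈ Ioi (0 : ℝ), (c * x) ^ (s - 1) / (1 + c * x / c)
      = c ^ (s - 1) * (x ^ (s - 1) / (1 + x)) := fun x (hx : 0 < x) => by
    rw [mul_rpow hc.le hx.le, mul_div_cancel_left₀ x hc.ne', mul_div_assoc]
  rw [setIntegral_congr_fun measurableSet_Ioi hscale, integral_const_mul,
    integral_Ioi_rpow_div_one_add h0 h1, smul_eq_mul, ← mul_assoc,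
    ← rpow_one_add' hc.le (by simp [h0.ne'])]
  ring_nf

theorem integral_Ioi_rpow_div_one_add_rpow_div {s p c : ℝ} (h0 : 0 < s) (hsp : s < p)
    (hc : 0 < c) :
    ∫ y in Ioi (0 : ℝ), y ^ (s - 1) / (1 + y ^ p / c)
      = c ^ (s / p) * (π / (p * sin (π * s / p))) := by
  have hp : 0 < p := h0.trans hsp
  have hsubst : ∀ y ∈ Ioi (0 : ℝ),
      (p * y ^ (p - 1)) • (p⁻¹ * ((y ^ p) ^ (s / p - 1) / (1 + y ^ p / c)))
        = y ^ (s - 1) / (1 + y ^ p / c) := fun y (hy : 0 < y) => by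
    have hexp : p - 1 + p * (s / p - 1) = s - 1 := by field_simp; ring
    rw [smul_eq_mul, ← rpow_mul hy.le, mul_mul_mul_comm, mul_inv_cancel₀ hp.ne', one_mul,
      mul_div_assoc', ← rpow_add hy, hexp]
  rw [← setIntegral_congr_fun measurableSet_Ioi hsubst,
    integral_comp_rpow_Ioi_of_pos (g := fun u => p⁻¹ * (u ^ (s / p - 1) / (1 + u / c))) hp,
    integral_const_mul,
    integral_Ioi_rpow_div_one_add_div (div_pos h0 hp) ((div_lt_one hp).2 hsp) hc]
  field_simp

open Module Metric in
theorem integral_one_div_one_add_norm_rpow_div {E : Type*} [NormedAddCommGroup E]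
    [NormedSpace ℝ E] [FiniteDimensional ℝ E] [Nontrivial E] [MeasurableSpace E]
    [BorelSpace E] (μ : Measure E) [μ.IsAddHaarMeasure] {α c : ℝ}
    (hα : finrank ℝ E < α) (hc : 0 < c) :
    ∫ x, 1 / (1 + ‖x‖ ^ α / c) ∂μ = finrank ℝ E * μ.real (ball 0 1)
      * (c ^ (finrank ℝ E / α) * (π / (α * sin (π * finrank ℝ E / α)))) := by
  have hpow : ∀ y ∈ Ioi (0 : ℝ), y ^ (finrank ℝ E - 1) • (1 / (1 + y ^ α / c))
      = y ^ ((finrank ℝ E : ℝ) - 1) / (1 + y ^ α / c) := fun y _ => by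
    rw [← Nat.cast_pred finrank_pos, rpow_natCast, smul_eq_mul, mul_one_div]
  rw [integral_fun_norm_addHaar μ (fun y => 1 / (1 + y ^ α / c)),
    setIntegral_congr_fun measurableSet_Ioi hpow,
    integral_Ioi_rpow_div_one_add_rpow_div (by exact_mod_cast finrank_pos) hα hc,
    nsmul_eq_mul, smul_eq_mul, mul_assoc]

/-- The planar interference integral (equation (15)): for path-loss exponent `α > 2`
and `c > 0`, `∫_{ℝ²} 1/(1 + ‖x‖^α/c) dx = 2π² c^{2/α} / (α sin(2π/α))`. -/
theorem stmt_5 (α c : ℝ) (hα : 2 < α) (hc : 0 < c) :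
    ∫ x : EuclideanSpace ℝ (Fin 2), 1 / (1 + ‖x‖ ^ α / c)
      = 2 * Real.pi ^ 2 * c ^ (2 / α) / (α * Real.sin (2 * Real.pi / α)) := by
  have hdim : Module.finrank ℝ (EuclideanSpace ℝ (Fin 2)) = 2 := finrank_euclideanSpace_fin
  have hball : volume.real (Metric.ball (0 : EuclideanSpace ℝ (Fin 2)) 1) = π := by
    simp [measureReal_def, pi_pos.le]
  rw [integral_one_div_one_add_norm_rpow_div volume (by simpa [hdim] using hα) hc, hdim, hball]
  push_cast
  rw [mul_comm π 2]
  ring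
end

section
/- Let q ∈ (0,1) be real, N ≥ 1 a natural number, and D ≥ 0 a real. Then for every function x : {1,…,N} → ℝ with x_n ≥ 0 for all n and ∑_{n=1}^{N} x_n = D, one has ∏_{n=1}^{N} (1 − q^{x_n+1}) ≤ (1 − q^{D/N+1})^{N}. -/
/-- Equidistant-hop case of Proposition 5 (continuous relaxation): equal split
of the retransmission budget maximizes the success-probability lower bound. -/
theorem stmt_11 (q : ℝ) (hq0 : 0 < q) (hq1 : q < 1) (N : ℕ) (hN : 1 ≤ N)
    (D : ℝ) (hD : 0 ≤ D) (x : Fin N → ℝ) (hx : ∀ n, 0 ≤ x n)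
    (hsum : ∑ n, x n = D) :
    ∏ n, (1 - q ^ (x n + 1)) ≤ (1 - q ^ (D / (N : ℝ) + 1)) ^ N := by
  have hNpos : (0 : ℝ) < N := by exact_mod_cast Nat.lt_of_lt_of_le Nat.zero_lt_one hN
  set a : Fin N → ℝ := fun n => 1 - q ^ (x n + 1) with ha
  have hqpow : ∀ n, 0 < q ^ (x n + 1) := fun n => Real.rpow_pos_of_pos hq0 _
  have hqlt1 : ∀ n, q ^ (x n + 1) ≤ 1 := fun n =>
    Real.rpow_le_one hq0.le hq1.le (by linarith [hx n])
  have hanonneg : ∀ n, 0 ≤ a n := fun n => by simp [ha]; exact hqlt1 n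
  have hw : ∀ i ∈ (Finset.univ : Finset (Fin N)), (0:ℝ) ≤ (N:ℝ)⁻¹ := fun _ _ => by positivity
  have hw' : ∑ _i : Fin N, (N:ℝ)⁻¹ = 1 := by
    simp [Finset.sum_const]
    field_simp
  -- Step 1: GM ≤ AM for a
  have step1 : ∏ n, (a n) ^ (N:ℝ)⁻¹ ≤ ∑ n, (N:ℝ)⁻¹ * a n :=
    Real.geom_mean_le_arith_mean_weighted _ _ _ hw hw' (fun i _ => hanonneg i)
  -- Step 2: GM ≤ AM for q^(x n + 1)
  have step2 : ∏ n, (q ^ (x n + 1)) ^ (N:ℝ)⁻¹ ≤ ∑ n, (N:ℝ)⁻¹ * q ^ (x n + 1) :=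
    Real.geom_mean_le_arith_mean_weighted _ _ _ hw hw' (fun i _ => (hqpow i).le)
  have hGM2 : ∏ n, (q ^ (x n + 1)) ^ (N:ℝ)⁻¹ = q ^ (D / (N:ℝ) + 1) := by
    have : ∀ n : Fin N, (q ^ (x n + 1)) ^ (N:ℝ)⁻¹ = q ^ ((x n + 1) * (N:ℝ)⁻¹) := fun n =>
      (Real.rpow_mul hq0.le _ _).symm
    rw [Finset.prod_congr rfl fun n _ => this n, ← Real.rpow_sum_of_pos hq0]
    congr 1
    rw [← Finset.sum_mul, Finset.sum_add_distrib, hsum]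
    simp
    field_simp
  -- arithmetic mean of a is ≤ 1 - q^(D/N+1)
  have havg : ∑ n, (N:ℝ)⁻¹ * a n ≤ 1 - q ^ (D / (N:ℝ) + 1) := by
    have : ∑ n, (N:ℝ)⁻¹ * a n = 1 - ∑ n, (N:ℝ)⁻¹ * q ^ (x n + 1) := by
      simp only [ha, mul_sub, Finset.sum_sub_distrib, mul_one, hw']
    rw [this]
    have := hGM2 ▸ step2
    linarith
  -- combine: ∏ a = (∏ a^(1/N))^N ≤ (avg)^N ≤ (1 - q^(D/N+1))^N
  have hprodnn : 0 ≤ ∏ n, (a n) ^ (N:ℝ)⁻¹ :=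
    Finset.prod_nonneg fun n _ => Real.rpow_nonneg (hanonneg n) _
  have key : (∏ n, (a n) ^ (N:ℝ)⁻¹) ^ N ≤ (1 - q ^ (D / (N:ℝ) + 1)) ^ N :=
    pow_le_pow_left₀ hprodnn (le_trans step1 havg) N
  have hprodeq : (∏ n, (a n) ^ (N:ℝ)⁻¹) ^ N = ∏ n, a n := by
    rw [← Finset.prod_pow]
    refine Finset.prod_congr rfl fun n _ => ?_
    rw [← Real.rpow_natCast ((a n) ^ (N:ℝ)⁻¹) N, ← Real.rpow_mul (hanonneg n),
      inv_mul_cancel₀ (ne_of_gt hNpos), Real.rpow_one]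
  rw [← hprodeq]
  exact key
end

section
/- Let q ∈ (0,1) be real, and let N ≥ 1 and D be natural numbers with N dividing D. Then for every function D' : {1,…,N} → ℕ with ∑_{n=1}^{N} D'_n = D, one has ∏_{n=1}^{N} (1 − q^{D'_n+1}) ≤ (1 − q^{D/N+1})^{N}, with equality when D'_n = D/N for all n. -/
open Finset

lemma amgm_prod_le (N : ℕ) (hN : 0 < N) (z : Fin N → ℝ) (hz : ∀ i, 0 ≤ z i) :
    ∏ i, z i ≤ ((∑ i, z i) / N) ^ N := by
  have hNR : (0:ℝ) < N := by exact_mod_cast hN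
  have hw' : ∑ _i : Fin N, (N : ℝ)⁻¹ = 1 := by
    simp [Finset.sum_const, Finset.card_univ]
    field_simp
  have key := Real.geom_mean_le_arith_mean_weighted Finset.univ
    (fun _ => (N : ℝ)⁻¹) z (fun i _ => by positivity) hw' (fun i _ => hz i)
  have hprod : ∏ i, z i ^ ((N : ℝ)⁻¹) = (∏ i, z i) ^ ((N : ℝ)⁻¹) := by
    rw [← Real.finset_prod_rpow _ _ (fun i _ => hz i)]
  have hsum : ∑ i, (N : ℝ)⁻¹ * z i = (∑ i, z i) / N := by
    rw [← Finset.mul_sum]; ring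
  rw [hprod, hsum] at key
  have hP : 0 ≤ ∏ i, z i := Finset.prod_nonneg fun i _ => hz i
  calc ∏ i, z i = ((∏ i, z i) ^ ((N:ℝ)⁻¹)) ^ N := by
        rw [← Real.rpow_natCast ((∏ i, z i) ^ ((N:ℝ)⁻¹)) N, ← Real.rpow_mul hP,
          inv_mul_cancel₀ (ne_of_gt hNR), Real.rpow_one]
    _ ≤ ((∑ i, z i) / N) ^ N :=
        pow_le_pow_left₀ (Real.rpow_nonneg hP _) key N

/-- Integer form of the equidistant-hop conclusion of Proposition 5: for `N`
equidistant hops and a budget `D` divisible by `N`, allocating `D/N`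
retransmissions per hop maximizes `∏ (1 - q^{D_n+1})`, with equality attained
at the equal allocation. -/
theorem stmt_12 (q : ℝ) (hq0 : 0 < q) (hq1 : q < 1) (N D : ℕ) (hN : 1 ≤ N)
    (hdvd : N ∣ D) (D' : Fin N → ℕ) (hsum : ∑ n, D' n = D) :
    (∏ n, (1 - q ^ (D' n + 1)) ≤ (1 - q ^ (D / N + 1)) ^ N) ∧
      ((∀ n, D' n = D / N) →
        ∏ n, (1 - q ^ (D' n + 1)) = (1 - q ^ (D / N + 1)) ^ N) := by
  have hNpos : 0 < N := hN
  have hNR : (0:ℝ) < N := by exact_mod_cast hNpos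
  set m : ℕ := D / N + 1 with hm
  have hNm : N * m = D + N := by
    rw [hm, Nat.mul_add, Nat.mul_div_cancel' hdvd, mul_one]
  -- nonnegativity of each factor
  have hfac : ∀ n : Fin N, 0 ≤ 1 - q ^ (D' n + 1) := fun n => by
    have : q ^ (D' n + 1) ≤ 1 := le_of_lt (pow_lt_one₀ hq0.le hq1 (Nat.succ_ne_zero _))
    linarith
  constructor
  · -- Step A: AM-GM on the factors
    have hA := amgm_prod_le N hNpos (fun n => 1 - q ^ (D' n + 1)) hfac
    -- Step B: AM-GM on q^{a_n}
    have hB := amgm_prod_le N hNpos (fun n => q ^ (D' n + 1)) (fun n => (pow_pos hq0 _).le)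
    have hprodq : ∏ n, q ^ (D' n + 1) = (q ^ m) ^ N := by
      rw [Finset.prod_pow_eq_pow_sum, ← pow_mul]
      congr 1
      rw [Finset.sum_add_distrib, hsum, Finset.sum_const, Finset.card_univ,
        Fintype.card_fin, smul_eq_mul, mul_one, mul_comm, hNm]
    rw [hprodq] at hB
    have hqm : q ^ m ≤ (∑ n, q ^ (D' n + 1)) / N :=
      le_of_pow_le_pow_left₀ hNpos.ne'
        (div_nonneg (Finset.sum_nonneg fun (n : Fin N) _ => (pow_pos hq0 (D' n + 1)).le) hNR.le) hB
    have havg : (∑ n, (1 - q ^ (D' n + 1))) / N ≤ 1 - q ^ m := by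
      have hs : ∑ n, (1 - q ^ (D' n + 1)) = N - ∑ n, q ^ (D' n + 1) := by
        simp [Finset.sum_sub_distrib, Finset.card_univ]
      rw [hs, sub_div, div_self (ne_of_gt hNR)]
      linarith
    calc ∏ n, (1 - q ^ (D' n + 1))
        ≤ ((∑ n, (1 - q ^ (D' n + 1))) / N) ^ N := hA
      _ ≤ (1 - q ^ m) ^ N :=
          pow_le_pow_left₀ (div_nonneg (Finset.sum_nonneg fun n _ => hfac n) hNR.le) havg N
  · intro h
    simp only [fun n => h n]
    rw [Finset.prod_const, Finset.card_univ, Fintype.card_fin]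
end

section
/- Let N ≥ 1 be a natural number, q_1, …, q_N ∈ (0,1) reals, and D ≥ 0 a real. Suppose x* : {1,…,N} → ℝ satisfies x*_n ≥ 0 for all n, ∑_{n=1}^{N} x*_n = D, and there exists a real γ such that −(log q_n) · q_n^{x*_n+1} / (1 − q_n^{x*_n+1}) = γ for every n. Then for every x : {1,…,N} → ℝ with x_n ≥ 0 for all n and ∑_{n=1}^{N} x_n = D, one has ∏_{n=1}^{N} (1 − q_n^{x_n+1}) ≤ ∏_{n=1}^{N} (1 − q_n^{x*_n+1}). -/
/-!
Each summand `t ↦ log (1 - q ^ (t + 1))` is concave, and the KKT expression is its derivative at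
`xstar n`. Summing the tangent-line inequalities at `xstar`, the common slope `γ` multiplies
`∑ n, (x n - xstar n) = 0`, so `∑ n, log (1 - q n ^ (x n + 1)) ≤ ∑ n, log (1 - q n ^ (xstar n + 1))`;
exponentiating gives the product inequality.
-/

open Real Finset

/-- Tangent-line inequality of the concave function `s ↦ log (1 - exp s)` at `s = log v`,
evaluated at `s = log u`. -/
lemma Real.log_one_sub_le_add_mul_log_div {u v : ℝ} (hu0 : 0 < u) (hu1 : u < 1)
    (hv0 : 0 < v) (hv1 : v < 1) :
    log (1 - u) ≤ log (1 - v) + v / (1 - v) * log (v / u) := by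
  have hv1' : 0 < 1 - v := by linarith
  have hratio : log ((1 - u) / (1 - v)) ≤ (1 - u) / (1 - v) - 1 :=
    log_le_sub_one_of_pos (div_pos (by linarith) hv1')
  have hlog : 1 - u / v ≤ log (v / u) := by
    simpa only [inv_div] using one_sub_inv_le_log_of_pos (div_pos hv0 hu0)
  rw [log_div (by linarith) hv1'.ne'] at hratio
  calc log (1 - u) ≤ log (1 - v) + v / (1 - v) * (1 - u / v) := by
        convert add_le_add_right hratio (log (1 - v)) using 1
        · ring
        · field_simp; ring
    _ ≤ log (1 - v) + v / (1 - v) * log (v / u) := by gcongr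

lemma Real.log_one_sub_rpow_le_tangent {q s t : ℝ} (hq0 : 0 < q) (hq1 : q < 1)
    (hs : -1 < s) (ht : -1 < t) :
    log (1 - q ^ (s + 1)) ≤
      log (1 - q ^ (t + 1)) + -log q * q ^ (t + 1) / (1 - q ^ (t + 1)) * (s - t) := by
  have hlog : log (q ^ (t + 1) / q ^ (s + 1)) = -log q * (s - t) := by
    rw [log_div (rpow_pos_of_pos hq0 _).ne' (rpow_pos_of_pos hq0 _).ne',
      log_rpow hq0, log_rpow hq0]
    ring
  have key := log_one_sub_le_add_mul_log_div (rpow_pos_of_pos hq0 (s + 1))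
    (rpow_lt_one hq0.le hq1 (by linarith)) (rpow_pos_of_pos hq0 (t + 1))
    (rpow_lt_one hq0.le hq1 (by linarith))
  rw [hlog] at key
  exact key.trans_eq (by ring)

lemma Finset.prod_le_prod_of_sum_log_le {ι : Type*} {s : Finset ι} {f g : ι → ℝ}
    (hf : ∀ i ∈ s, 0 < f i) (hg : ∀ i ∈ s, 0 < g i)
    (h : ∑ i ∈ s, log (f i) ≤ ∑ i ∈ s, log (g i)) :
    ∏ i ∈ s, f i ≤ ∏ i ∈ s, g i := by
  rwa [← log_le_log_iff (prod_pos hf) (prod_pos hg),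
    log_prod fun i hi => (hf i hi).ne', log_prod fun i hi => (hg i hi).ne']

theorem stmt_13_general (N : ℕ) (q : Fin N → ℝ)
    (hq : ∀ n, q n ∈ Set.Ioo (0:ℝ) 1) (D : ℝ)
    (xstar : Fin N → ℝ) (hxstar : ∀ n, 0 ≤ xstar n)
    (hsumstar : ∑ n, xstar n = D)
    (hKKT : ∃ γ : ℝ, ∀ n,
      -(Real.log (q n)) * (q n) ^ (xstar n + 1) / (1 - (q n) ^ (xstar n + 1)) = γ)
    (x : Fin N → ℝ) (hx : ∀ n, 0 ≤ x n) (hsum : ∑ n, x n = D) :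
    ∏ n, (1 - (q n) ^ (x n + 1)) ≤ ∏ n, (1 - (q n) ^ (xstar n + 1)) := by
  obtain ⟨γ, hγ⟩ := hKKT
  have hfactor_pos : ∀ (y : Fin N → ℝ), (∀ n, 0 ≤ y n) → ∀ n ∈ univ, 0 < 1 - q n ^ (y n + 1) :=
    fun y hy n _ => sub_pos.2 (rpow_lt_one (hq n).1.le (hq n).2 (by linarith [hy n]))
  have htangent : ∀ n ∈ univ, log (1 - q n ^ (x n + 1)) ≤
      log (1 - q n ^ (xstar n + 1)) + γ * (x n - xstar n) := fun n _ => by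
    rw [← hγ n]
    exact log_one_sub_rpow_le_tangent (hq n).1 (hq n).2 (by linarith [hx n])
      (by linarith [hxstar n])
  refine prod_le_prod_of_sum_log_le (hfactor_pos x hx) (hfactor_pos xstar hxstar) ?_
  calc ∑ n, log (1 - q n ^ (x n + 1))
      ≤ ∑ n, (log (1 - q n ^ (xstar n + 1)) + γ * (x n - xstar n)) := sum_le_sum htangent
    _ = ∑ n, log (1 - q n ^ (xstar n + 1)) := by
      rw [sum_add_distrib, ← mul_sum, sum_sub_distrib, hsum, hsumstar, sub_self, mul_zero,
        add_zero]

/-- General case of Proposition 5: any allocation satisfying the KKT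
stationarity condition is a global maximizer of the success-probability
lower bound `∏ (1 - q_n^{x_n+1})` subject to the budget constraint. -/
theorem stmt_13 (N : ℕ) (hN : 1 ≤ N) (q : Fin N → ℝ)
    (hq : ∀ n, q n ∈ Set.Ioo (0:ℝ) 1) (D : ℝ) (hD : 0 ≤ D)
    (xstar : Fin N → ℝ) (hxstar : ∀ n, 0 ≤ xstar n)
    (hsumstar : ∑ n, xstar n = D)
    (hKKT : ∃ γ : ℝ, ∀ n,
      -(Real.log (q n)) * (q n) ^ (xstar n + 1) / (1 - (q n) ^ (xstar n + 1)) = γ)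
    (x : Fin N → ℝ) (hx : ∀ n, 0 ≤ x n) (hsum : ∑ n, x n = D) :
    ∏ n, (1 - (q n) ^ (x n + 1)) ≤ ∏ n, (1 - (q n) ^ (xstar n + 1)) :=
  stmt_13_general N q hq D xstar hxstar hsumstar hKKT x hx hsum
end

section
/- Let D ≥ 1 be a natural number and a > 0 a real. For each natural number N ≥ 1 and real λ > 0 define f(N, λ) = (1 − (1 − exp(−a·λ/N²))^{⌊D/N⌋+1})^{N} / (D + N). Then there exists λ₀ > 0 such that for every λ with 0 < λ < λ₀ and every natural number N ≥ 2, f(N, λ) < f(1, λ). -/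
/-- The transmission-capacity lower bound for `N` equidistant hops with per-hop
retransmission budget `⌊D/N⌋` in the sparse regime (Proposition 6):
`f N λ = (1 - (1 - exp(-aλ/N²))^{⌊D/N⌋+1})^N / (D + N)`. -/
noncomputable def tcLowerBound (D : ℕ) (a : ℝ) (N : ℕ) (l : ℝ) : ℝ :=
  (1 - (1 - Real.exp (-(a * l) / (N : ℝ) ^ 2)) ^ (D / N + 1)) ^ N / ((D : ℝ) + (N : ℝ))

/-- Proposition 6: in the sparse network regime, single-hop transmission (`N = 1`)
maximizes the lower bound on the transmission capacity. -/
theorem stmt_14 (D : ℕ) (hD : 1 ≤ D) (a : ℝ) (ha : 0 < a) :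
    ∃ lam0 > (0:ℝ), ∀ l : ℝ, 0 < l → l < lam0 → ∀ N : ℕ, 2 ≤ N →
      tcLowerBound D a N l < tcLowerBound D a 1 l := by
  have hD2 : (0:ℝ) < (D:ℝ) + 2 := by positivity
  refine ⟨1 / (a * ((D:ℝ) + 2)), by positivity, ?_⟩
  intro l hl hl' N hN
  have hx : 0 < a * l := by positivity
  have hxle : a * l < 1 / ((D:ℝ) + 2) := by
    have h1 := mul_lt_mul_of_pos_left hl' ha
    have h2 : a * (1 / (a * ((D:ℝ) + 2))) = 1 / ((D:ℝ) + 2) := by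
      field_simp
    rw [h2] at h1; exact h1
  -- upper bound for f(N,l)
  have hNpos : (0:ℝ) < (N:ℝ) := by positivity
  have hN2 : (2:ℝ) ≤ (N:ℝ) := by exact_mod_cast hN
  set s : ℝ := 1 - Real.exp (-(a * l) / (N : ℝ) ^ 2) with hs
  have hsarg : -(a * l) / (N : ℝ) ^ 2 < 0 := by
    apply div_neg_of_neg_of_pos <;> [linarith; positivity]
  have hs0 : 0 < s := by
    have := Real.exp_lt_one_iff.mpr hsarg
    simp [hs]; linarith
  have hs1 : s < 1 := by
    have := Real.exp_pos (-(a * l) / (N : ℝ) ^ 2)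
    simp [hs]; linarith
  have hsk0 : 0 < s ^ (D / N + 1) := pow_pos hs0 _
  have hsk1 : s ^ (D / N + 1) ≤ 1 := pow_le_one₀ hs0.le hs1.le
  have hb0 : 0 ≤ 1 - s ^ (D / N + 1) := by linarith
  have hb1 : 1 - s ^ (D / N + 1) < 1 := by linarith
  have hbn : (1 - s ^ (D / N + 1)) ^ N < 1 :=
    pow_lt_one₀ hb0 hb1 (by omega)
  have hbn0 : 0 ≤ (1 - s ^ (D / N + 1)) ^ N := pow_nonneg hb0 _
  have hfN : tcLowerBound D a N l < 1 / ((D:ℝ) + 2) := by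
    unfold tcLowerBound
    rw [div_lt_div_iff₀ (by linarith) hD2]
    nlinarith
  -- lower bound for f(1,l)
  have hf1 : 1 / ((D:ℝ) + 2) < tcLowerBound D a 1 l := by
    unfold tcLowerBound
    simp only [Nat.cast_one, one_pow, Nat.div_one, pow_one, div_one]
    set t : ℝ := 1 - Real.exp (-(a * l)) with ht
    have hexp : 1 - (a*l) < Real.exp (-(a * l)) := by
      have := Real.add_one_lt_exp (x := -(a*l)) (by linarith)
      linarith
    have ht0 : 0 < t := by
      have : Real.exp (-(a * l)) < 1 := Real.exp_lt_one_iff.mpr (by linarith)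
      simp only [ht]; linarith
    have htlt : t * ((D:ℝ) + 2) < 1 := by
      have h1 : t < a * l := by simp only [ht]; linarith
      have h2 : a * l * ((D:ℝ) + 2) < 1 := by
        rw [← lt_div_iff₀ hD2]; exact hxle
      nlinarith
    have ht1 : t ≤ 1 := by
      have := Real.exp_pos (-(a * l))
      simp only [ht]; linarith
    have htk : t ^ (D + 1) ≤ t := by
      calc t ^ (D + 1) ≤ t ^ 1 := pow_le_pow_of_le_one ht0.le ht1 (by omega)
        _ = t := pow_one t
    have hD1 : (0:ℝ) < (D:ℝ) + 1 := by positivity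
    rw [div_lt_div_iff₀ hD2 hD1]
    nlinarith
  linarith
end
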